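/- arXiv:2208.13713 — 3 statements merged into one kernel-verified Lean document; each statement's English description precedes it below -/
import Mathlib

section
/- For all x, y > 0, the Bregman divergence of the generalized negative entropy h(u) = u log u - u satisfies V_h(y, x) = y log(y/x) + x - y ≥ (y - x)^2 / (2 max(x, y)) (local strong convexity). -/
lemma sinh_le_mul_cosh {u : ℝ} (hu : 0 ≤ u) : Real.sinh u ≤ u * Real.cosh u := by
  have hmono : MonotoneOn (fun x : ℝ => x * Real.cosh x - Real.sinh x) (Set.Ici 0) := by
    apply monotoneOn_of_deriv_nonneg (convex_Ici 0)
    · exact ((continuous_id.mul Real.continuous_cosh).sub Real.continuous_sinh).continuousOn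
    · intro x _
      exact ((differentiableAt_id.mul Real.differentiable_cosh.differentiableAt).sub
        Real.differentiable_sinh.differentiableAt).differentiableWithinAt
    · intro x hx
      rw [interior_Ici, Set.mem_Ioi] at hx
      have hderiv : HasDerivAt (fun x : ℝ => x * Real.cosh x - Real.sinh x)
          (x * Real.sinh x) x := by
        have h1 := (hasDerivAt_id x).mul (Real.hasDerivAt_cosh x)
        have h2 := Real.hasDerivAt_sinh x
        exact (h1.sub h2).congr_deriv (by simp)
      rw [hderiv.deriv]
      exact mul_nonneg hx.le (Real.sinh_nonneg_iff.mpr hx.le)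
  have := hmono (Set.self_mem_Ici) (Set.mem_Ici.mpr hu) hu
  simpa using this

lemma log_ge_pade {t : ℝ} (ht : 1 ≤ t) : 2 * (t - 1) / (t + 1) ≤ Real.log t := by
  have ht0 : 0 < t := by linarith
  set s := Real.sqrt t with hs
  have hs1 : 1 ≤ s := by
    rw [hs, show (1:ℝ) = Real.sqrt 1 by simp]
    exact Real.sqrt_le_sqrt ht
  have hs0 : 0 < s := by linarith
  have hst : s ^ 2 = t := Real.sq_sqrt ht0.le
  have hu : 0 ≤ Real.log s := Real.log_nonneg hs1
  have h1 : Real.sinh (Real.log s) ≤ Real.log s * Real.cosh (Real.log s) :=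
    sinh_le_mul_cosh hu
  rw [Real.sinh_log hs0, Real.cosh_log hs0] at h1
  have hlog : Real.log t = 2 * Real.log s := by
    rw [hs, Real.log_sqrt ht0.le]; ring
  rw [hlog]
  rw [div_le_iff₀ (by linarith : (0:ℝ) < t + 1)]
  have hinv : s⁻¹ = s / t := by
    field_simp
    nlinarith [hst]
  rw [hinv] at h1
  have h2 : (s - s / t) / 2 * (2 * t) ≤ Real.log s * ((s + s / t) / 2) * (2 * t) := by
    apply mul_le_mul_of_nonneg_right h1; linarith
  have e1 : (s - s / t) / 2 * (2 * t) = s * (t - 1) := by field_simp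
  have e2 : Real.log s * ((s + s / t) / 2) * (2 * t) = Real.log s * (s * (t + 1)) := by
    field_simp
  rw [e1, e2] at h2
  nlinarith [h2, hu, hs0, mul_nonneg hu (sub_nonneg.mpr ht)]

lemma log_le_sinh_bound {t : ℝ} (ht : 1 ≤ t) : Real.log t ≤ (t - t⁻¹) / 2 := by
  have ht0 : 0 < t := by linarith
  have h := Real.self_le_sinh_iff.mpr (Real.log_nonneg ht)
  rwa [Real.sinh_log ht0] at h

theorem bregman_neg_entropy_local_strong_convexity (x y : ℝ) (hx : 0 < x) (hy : 0 < y) :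
    y * Real.log (y / x) + x - y ≥ (y - x) ^ 2 / (2 * max x y) := by
  rcases le_total x y with hxy | hxy
  · -- max = y
    rw [max_eq_right hxy]
    have ht : 1 ≤ y / x := (one_le_div hx).mpr hxy
    have h1 := log_ge_pade ht
    have he : 2 * (y / x - 1) / (y / x + 1) = 2 * (y - x) / (y + x) := by
      rw [div_eq_div_iff (by positivity) (by positivity)]
      field_simp
    rw [he] at h1
    have h2 : 2 * (y - x) ≤ Real.log (y / x) * (y + x) := by
      rw [div_le_iff₀ (by linarith : (0:ℝ) < y + x)] at h1
      linarith
    rw [ge_iff_le, div_le_iff₀ (by positivity : (0:ℝ) < 2 * y)]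
    nlinarith [mul_le_mul_of_nonneg_left h2 hy.le, sq_nonneg (y - x),
      mul_nonneg (mul_nonneg hy.le (sub_nonneg.mpr hxy)) (sub_nonneg.mpr hxy)]
  · -- max = x
    rw [max_eq_left hxy]
    have ht : 1 ≤ x / y := (one_le_div hy).mpr hxy
    have h1 := log_le_sinh_bound ht
    have hinv : (x / y)⁻¹ = y / x := by field_simp
    rw [hinv] at h1
    have hlog : Real.log (y / x) = - Real.log (x / y) := by
      rw [Real.log_div hy.ne' hx.ne', Real.log_div hx.ne' hy.ne']; ring
    rw [hlog]
    have h2 : Real.log (x / y) * (2 * (x * y)) ≤ x ^ 2 - y ^ 2 := by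
      have := mul_le_mul_of_nonneg_right h1 (by positivity : (0:ℝ) ≤ 2 * (x * y))
      calc Real.log (x / y) * (2 * (x * y)) ≤ (x / y - y / x) / 2 * (2 * (x * y)) := this
        _ = x ^ 2 - y ^ 2 := by field_simp
    rw [ge_iff_le, div_le_iff₀ (by positivity : (0:ℝ) < 2 * x)]
    nlinarith [mul_le_mul_of_nonneg_right h2 hx.le, sq_nonneg (x - y)]
end

section
/- Suppose λ_t > 0, 0 ≤ g ≤ 1, α ∈ (0,1], and λ_{t+1} = λ_t exp(-α g). Then (1/2) α² g² max(λ_t, λ_{t+1}) ≤ α (λ_t - λ_{t+1}). -/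
lemma exp_neg_le_one_sub_half (x : ℝ) (h0 : 0 ≤ x) (h1 : x ≤ 1) :
    Real.exp (-x) ≤ 1 - x / 2 := by
  have h2 : (1 : ℝ) + x ≤ Real.exp x := by linarith [Real.add_one_le_exp x]
  have h3 : (0 : ℝ) < 1 + x := by linarith
  have h4 : Real.exp (-x) ≤ 1 / (1 + x) := by
    rw [Real.exp_neg, inv_eq_one_div, div_le_div_iff₀ (Real.exp_pos x) h3]
    nlinarith
  have h5 : 1 / (1 + x) ≤ 1 - x / 2 := by
    rw [div_le_iff₀ h3]; nlinarith
  linarith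

theorem case_nonneg_gradient (α g lamt lamt1 : ℝ)
    (hlamt : 0 < lamt) (hg0 : 0 ≤ g) (hg1 : g ≤ 1)
    (hα0 : 0 < α) (hα1 : α ≤ 1)
    (hupd : lamt1 = lamt * Real.exp (-α * g)) :
    (1 / 2) * α ^ 2 * g ^ 2 * max lamt lamt1 ≤ α * (lamt - lamt1) := by
  have hx0 : 0 ≤ α * g := mul_nonneg hα0.le hg0
  have hx1 : α * g ≤ 1 := by nlinarith
  have hexp : Real.exp (-(α * g)) ≤ 1 - α * g / 2 :=
    exp_neg_le_one_sub_half _ hx0 hx1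
  have hle : lamt1 ≤ lamt := by
    rw [hupd]
    nlinarith [Real.exp_pos (-α * g), Real.exp_le_one_iff.2 (by nlinarith : -α * g ≤ 0)]
  rw [max_eq_left hle, hupd]
  have : Real.exp (-α * g) ≤ 1 - α * g / 2 := by
    rwa [← neg_mul] at hexp
  nlinarith [sq_nonneg g, sq_nonneg α, mul_pos hα0 hlamt,
    mul_nonneg (mul_nonneg hα0.le hα0.le) (mul_nonneg hg0 hlamt.le)]
end

section
/- Let v ∈ [0,1], λ > 0, μ ≥ 0 with μ + λ > 0, and let x : ℝ≥0 → [0,1] be nondecreasing with Myerson payment p(b) = b·x(b) - ∫_0^b x(z) dz. Then b* = ((1+λ)/(μ+λ))·v maximizes b ↦ v·x(b) + λ·(v·x(b) - p(b)) - μ·p(b) over b ≥ 0. -/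
theorem optimal_bid (v lam mu : ℝ) (hv0 : 0 ≤ v) (hv1 : v ≤ 1)
    (hlam : 0 < lam) (hmu : 0 ≤ mu) (hmulam : 0 < mu + lam)
    (x : ℝ → ℝ)
    (hx_range : ∀ b, 0 ≤ b → 0 ≤ x b ∧ x b ≤ 1)
    (hx_mono : MonotoneOn x (Set.Ici (0 : ℝ)))
    (p : ℝ → ℝ)
    (hp : ∀ b, p b = b * x b - ∫ z in (0 : ℝ)..b, x z) :
    ∀ b, 0 ≤ b →
      v * x b + lam * (v * x b - p b) - mu * p b ≤
        v * x (((1 + lam) / (mu + lam)) * v)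
          + lam * (v * x (((1 + lam) / (mu + lam)) * v) - p (((1 + lam) / (mu + lam)) * v))
          - mu * p (((1 + lam) / (mu + lam)) * v) := by
  intro b hb
  set B : ℝ := ((1 + lam) / (mu + lam)) * v with hBdef
  have hB0 : 0 ≤ B := mul_nonneg (div_nonneg (by linarith) hmulam.le) hv0
  have hint : ∀ a c : ℝ, 0 ≤ a → a ≤ c → IntervalIntegrable x MeasureTheory.volume a c := by
    intro a c ha hac
    apply MonotoneOn.intervalIntegrable
    apply hx_mono.mono
    rw [Set.uIcc_of_le hac]
    intro z hz
    exact le_trans ha hz.1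
  have hBid : (mu + lam) * B = (1 + lam) * v := by
    rw [hBdef]; field_simp
  clear_value B
  have hkey : (∫ z in (0:ℝ)..b, x z) + (B - b) * x b ≤ ∫ z in (0:ℝ)..B, x z := by
    rcases le_total b B with h | h
    · have h1 : (∫ z in b..B, (fun _ => x b) z) ≤ ∫ z in b..B, x z := by
        apply intervalIntegral.integral_mono_on h intervalIntegrable_const (hint b B hb h)
        intro z hz
        exact hx_mono hb (le_trans hb hz.1) hz.1
      rw [intervalIntegral.integral_const, smul_eq_mul] at h1
      have h2 : (∫ z in (0:ℝ)..b, x z) + ∫ z in b..B, x z = ∫ z in (0:ℝ)..B, x z :=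
        intervalIntegral.integral_add_adjacent_intervals (hint 0 b le_rfl hb) (hint b B hb h)
      linarith
    · have h1 : (∫ z in B..b, x z) ≤ ∫ z in B..b, (fun _ => x b) z := by
        apply intervalIntegral.integral_mono_on h (hint B b hB0 h) intervalIntegrable_const
        intro z hz
        exact hx_mono (le_trans hB0 hz.1) hb hz.2
      rw [intervalIntegral.integral_const, smul_eq_mul] at h1
      have h2 : (∫ z in (0:ℝ)..B, x z) + ∫ z in B..b, x z = ∫ z in (0:ℝ)..b, x z :=
        intervalIntegral.integral_add_adjacent_intervals (hint 0 B le_rfl hB0) (hint B b hB0 h)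
      linarith
  have hfin := mul_le_mul_of_nonneg_left hkey hmulam.le
  have e1 : v * x b + lam * (v * x b - p b) - mu * p b
      = (mu + lam) * ((∫ z in (0:ℝ)..b, x z) + (B - b) * x b) := by
    rw [hp b]; linear_combination (-(x b)) * hBid
  have e2 : v * x B + lam * (v * x B - p B) - mu * p B
      = (mu + lam) * (∫ z in (0:ℝ)..B, x z) := by
    rw [hp B]; linear_combination (-(x B)) * hBid
  rw [e1]
  calc (mu + lam) * ((∫ z in (0:ℝ)..b, x z) + (B - b) * x b)
      ≤ (mu + lam) * (∫ z in (0:ℝ)..B, x z) := hfin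
    _ = _ := e2.symm
end
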